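/- arXiv:1503.03520 — 3 statements merged into one kernel-verified Lean document; each statement's English description precedes it below -/
import Mathlib

section
/- Let m ≥ n, let τ > 0, let A ∈ ℝ^{m×n} be such that AᵀA is invertible, and let x* ∈ ℝⁿ. Let g ∈ ℝⁿ satisfy gᵢ = 1 whenever x*ᵢ > 0, gᵢ = −1 whenever x*ᵢ < 0, and gᵢ ∈ [−1, 1] whenever x*ᵢ = 0. Define e = τ A (AᵀA)⁻¹ g and b = A x* + e. Then x* is a global minimizer of f_τ, i.e., f_τ(x*) ≤ f_τ(x) for all x ∈ ℝⁿ. -/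
open Matrix

/-- The ℓ₁-regularized least-squares objective
`f_τ(x) = τ‖x‖₁ + (1/2)‖Ax − b‖₂²`. -/
noncomputable def fTau {m n : ℕ} (τ : ℝ) (A : Matrix (Fin m) (Fin n) ℝ) (b : Fin m → ℝ)
    (x : Fin n → ℝ) : ℝ :=
  τ * ∑ i, |x i| + (1 / 2) * ∑ j, (A.mulVec x - b) j ^ 2

/-- Correctness of the instance generator IGen for `m ≥ n`. -/
theorem igen_correct {m n : ℕ} (hmn : n ≤ m) (τ : ℝ) (hτ : 0 < τ)
    (A : Matrix (Fin m) (Fin n) ℝ) (hA : IsUnit (Aᵀ * A))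
    (xstar : Fin n → ℝ) (g : Fin n → ℝ)
    (hg : ∀ i, (0 < xstar i → g i = 1) ∧ (xstar i < 0 → g i = -1) ∧
      (xstar i = 0 → g i ∈ Set.Icc (-1 : ℝ) 1))
    (e : Fin m → ℝ) (he : e = τ • A.mulVec ((Aᵀ * A)⁻¹.mulVec g))
    (b : Fin m → ℝ) (hb : b = A.mulVec xstar + e) :
    ∀ x : Fin n → ℝ, fTau τ A b xstar ≤ fTau τ A b x := by
  intro x
  have hdet : IsUnit (Aᵀ * A).det := (Matrix.isUnit_iff_isUnit_det _).mp hA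
  have hinv : (Aᵀ * A) * (Aᵀ * A)⁻¹ = 1 := Matrix.mul_nonsing_inv _ hdet
  set d : Fin n → ℝ := x - xstar with hd
  have hr : A.mulVec xstar - b = -e := by rw [hb]; abel
  -- key inner product identity
  have key : (A.mulVec xstar - b) ⬝ᵥ A.mulVec d = -(τ * (g ⬝ᵥ d)) := by
    rw [hr, he, Matrix.dotProduct_mulVec]
    have h2 : Matrix.vecMul (A.mulVec ((Aᵀ * A)⁻¹.mulVec g)) A = g := by
      rw [← Matrix.mulVec_transpose, Matrix.mulVec_mulVec, Matrix.mulVec_mulVec,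
        hinv, Matrix.one_mulVec]
    have h1 : Matrix.vecMul (-(τ • A.mulVec ((Aᵀ * A)⁻¹.mulVec g))) A
        = -(τ • Matrix.vecMul (A.mulVec ((Aᵀ * A)⁻¹.mulVec g)) A) := by
      rw [Matrix.neg_vecMul]
      congr 1
      ext j
      simp [Matrix.vecMul, dotProduct, Finset.mul_sum, mul_assoc]
    rw [h1, h2]
    simp [neg_dotProduct, smul_dotProduct]
  -- pointwise subgradient inequality
  have hpt : ∀ i, g i * d i + |xstar i| ≤ |x i| := by
    intro i
    rcases lt_trichotomy (xstar i) 0 with h | h | h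
    · rw [(hg i).2.1 h, abs_of_neg h]
      have := neg_abs_le (x i)
      simp only [hd, Pi.sub_apply]; linarith
    · rw [h]
      have h1 := (hg i).2.2 h
      have : g i * x i ≤ |x i| := by
        calc g i * x i ≤ |g i * x i| := le_abs_self _
        _ = |g i| * |x i| := abs_mul _ _
        _ ≤ 1 * |x i| := by
            apply mul_le_mul_of_nonneg_right _ (abs_nonneg _)
            exact abs_le.mpr ⟨h1.1, h1.2⟩
        _ = |x i| := one_mul _
      simp only [hd, Pi.sub_apply, h]; simpa using this
    · rw [(hg i).1 h, abs_of_pos h]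
      have := le_abs_self (x i)
      simp only [hd, Pi.sub_apply]; linarith
  have hsum : ∑ i, (g i * d i + |xstar i|) ≤ ∑ i, |x i| :=
    Finset.sum_le_sum fun i _ => hpt i
  -- quadratic expansion
  have hx : A.mulVec x - b = (A.mulVec xstar - b) + A.mulVec d := by
    have : A.mulVec x = A.mulVec xstar + A.mulVec d := by
      rw [← Matrix.mulVec_add]; congr 1; simp [hd]
    rw [this]; abel
  have hquad : ∑ j, (A.mulVec x - b) j ^ 2
      = ∑ j, (A.mulVec xstar - b) j ^ 2 + 2 * ((A.mulVec xstar - b) ⬝ᵥ A.mulVec d)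
        + ∑ j, (A.mulVec d) j ^ 2 := by
    rw [hx]
    simp only [Pi.add_apply]
    rw [dotProduct, Finset.mul_sum, ← Finset.sum_add_distrib, ← Finset.sum_add_distrib]
    apply Finset.sum_congr rfl
    intro j _; ring
  have hAd : 0 ≤ ∑ j, (A.mulVec d) j ^ 2 := Finset.sum_nonneg fun j _ => sq_nonneg _
  have hgd : g ⬝ᵥ d = ∑ i, g i * d i := rfl
  simp only [fTau, hquad, key, hgd]
  have hG : ∑ i, g i * d i + ∑ i, |xstar i| ≤ ∑ i, |x i| := by
    rw [← Finset.sum_add_distrib]; exact hsum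
  have hτsum := mul_le_mul_of_nonneg_left hG hτ.le
  rw [mul_add] at hτsum
  linarith [hAd, hτsum]
end

section
/- Let τ > 0, μ > 0, A ∈ ℝ^{m×n}, b ∈ ℝ^m. Suppose x* ∈ ℝⁿ is a global minimizer of f_τ and x_μ ∈ ℝⁿ is a global minimizer of the smoothed function f_τ^μ. Then f_τ(x*) ≤ f_τ(x_μ) ≤ f_τ(x*) + τ n μ. -/
open Matrix

/-- The smoothed objective `f_τ^μ(x) = τ ψ_μ(x) + (1/2)‖Ax − b‖₂²`, where `ψ_μ` is the
pseudo-Huber function. -/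
noncomputable def fTauMu {m n : ℕ} (τ μ : ℝ) (A : Matrix (Fin m) (Fin n) ℝ) (b : Fin m → ℝ)
    (x : Fin n → ℝ) : ℝ :=
  τ * ∑ i, (Real.sqrt (μ ^ 2 + x i ^ 2) - μ) + (1 / 2) * ∑ j, (A.mulVec x - b) j ^ 2

/-- If `x*` minimizes `f_τ` and `x_μ` minimizes the smoothed objective `f_τ^μ`, then
`f_τ(x*) ≤ f_τ(x_μ) ≤ f_τ(x*) + τnμ`. -/
theorem smoothing_error {m n : ℕ} (τ μ : ℝ) (hτ : 0 < τ) (hμ : 0 < μ)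
    (A : Matrix (Fin m) (Fin n) ℝ) (b : Fin m → ℝ)
    (xstar xmu : Fin n → ℝ)
    (hxstar : ∀ x : Fin n → ℝ, fTau τ A b xstar ≤ fTau τ A b x)
    (hxmu : ∀ x : Fin n → ℝ, fTauMu τ μ A b xmu ≤ fTauMu τ μ A b x) :
    fTau τ A b xstar ≤ fTau τ A b xmu ∧
      fTau τ A b xmu ≤ fTau τ A b xstar + τ * n * μ := by
  have key : ∀ x : Fin n → ℝ, fTauMu τ μ A b x ≤ fTau τ A b x ∧
      fTau τ A b x ≤ fTauMu τ μ A b x + τ * n * μ := by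
    intro x
    have hlow : ∀ i, |x i| - μ ≤ Real.sqrt (μ ^ 2 + x i ^ 2) - μ := by
      intro i
      have : |x i| ≤ Real.sqrt (μ ^ 2 + x i ^ 2) := by
        rw [← Real.sqrt_sq_eq_abs]
        exact Real.sqrt_le_sqrt (by nlinarith [sq_nonneg μ])
      linarith
    have hup : ∀ i, Real.sqrt (μ ^ 2 + x i ^ 2) - μ ≤ |x i| := by
      intro i
      have : Real.sqrt (μ ^ 2 + x i ^ 2) ≤ μ + |x i| := by
        have h1 : Real.sqrt (μ ^ 2 + x i ^ 2) ≤ Real.sqrt ((μ + |x i|) ^ 2) :=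
          Real.sqrt_le_sqrt (by nlinarith [abs_nonneg (x i), hμ.le, sq_abs (x i)])
        rwa [Real.sqrt_sq (by positivity)] at h1
      linarith
    constructor
    · unfold fTau fTauMu
      gcongr ?_ + _
      exact mul_le_mul_of_nonneg_left (Finset.sum_le_sum fun i _ => hup i) hτ.le
    · unfold fTau fTauMu
      have hs : ∑ i, |x i| ≤ ∑ i, (Real.sqrt (μ ^ 2 + x i ^ 2) - μ) + n * μ := by
        have := Finset.sum_le_sum (fun i (_ : i ∈ Finset.univ) => hlow i)
        simp only [Finset.sum_sub_distrib, Finset.sum_const, Finset.card_univ,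
          Fintype.card_fin, nsmul_eq_mul] at this ⊢
        linarith
      nlinarith [hτ.le]
  refine ⟨hxstar xmu, ?_⟩
  have h1 := (key xmu).2
  have h2 := hxmu xstar
  have h3 := (key xstar).1
  linarith
end

section
/- Let τ > 0, A ∈ ℝ^{m×n}, b ∈ ℝ^m, and let x* ∈ ℝⁿ be a global minimizer of f_τ with support S = {i : x*ᵢ ≠ 0}. Suppose there exists a nonzero vector d ∈ ℝⁿ with dᵢ = 0 for all i ∉ S and A d = 0. Then f_τ does not have a unique global minimizer: there exists y ∈ ℝⁿ with y ≠ x* and f_τ(y) = f_τ(x*), so y is also a global minimizer of f_τ. -/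
open Matrix

lemma abs_add_small {a c : ℝ} (h : |c| < |a|) : |a + c| = |a| + Real.sign a * c := by
  rcases lt_trichotomy a 0 with ha | ha | ha
  · have h1 : |a| = -a := abs_of_neg ha
    have h2 : a + c < 0 := by
      have := lt_of_le_of_lt (le_abs_self c) h
      rw [h1] at this; linarith
    rw [abs_of_neg h2, Real.sign_of_neg ha, h1]; ring
  · subst ha; simp at h; exact absurd h (by simp [abs_nonneg])
  · have h1 : |a| = a := abs_of_pos ha
    have h2 : 0 < a + c := by
      have h3 : -c ≤ |c| := neg_le_abs c
      have h4 := lt_of_le_of_lt h3 h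
      rw [h1] at h4; linarith
    rw [abs_of_pos h2, Real.sign_of_pos ha, h1]; ring

/-- If a global minimizer `x*` of `f_τ` has support `S` and there is a nonzero vector `d`
supported on `S` with `Ad = 0`, then the global minimizer is not unique: there is `y ≠ x*`
with `f_τ(y) = f_τ(x*)`, so `y` is also a global minimizer. -/
theorem nonunique_minimizer {m n : ℕ} (τ : ℝ) (hτ : 0 < τ)
    (A : Matrix (Fin m) (Fin n) ℝ) (b : Fin m → ℝ) (xstar : Fin n → ℝ)
    (hmin : ∀ x : Fin n → ℝ, fTau τ A b xstar ≤ fTau τ A b x)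
    (d : Fin n → ℝ) (hd : d ≠ 0)
    (hdS : ∀ i, xstar i = 0 → d i = 0)
    (hAd : A.mulVec d = 0) :
    ∃ y : Fin n → ℝ, y ≠ xstar ∧ fTau τ A b y = fTau τ A b xstar ∧
      ∀ x : Fin n → ℝ, fTau τ A b y ≤ fTau τ A b x := by
  -- find an index where d is nonzero
  have hex : ∃ i, d i ≠ 0 := by
    by_contra h
    push_neg at h
    exact hd (funext h)
  obtain ⟨i0, hi0⟩ := hex
  have hx0 : xstar i0 ≠ 0 := fun h => hi0 (hdS i0 h)
  -- the support set
  set S : Finset (Fin n) := Finset.univ.filter (fun i => xstar i ≠ 0) with hS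
  have hi0S : i0 ∈ S := by simp [hS, hx0]
  have hSne : S.Nonempty := ⟨i0, hi0S⟩
  set c : ℝ := S.inf' hSne (fun i => |xstar i|) with hc
  have hcpos : 0 < c := by
    rw [hc]
    apply Finset.lt_inf'_iff hSne (a := (0 : ℝ)) |>.mpr
    intro i hi
    have : xstar i ≠ 0 := by
      simp [hS] at hi; exact hi
    exact abs_pos.mpr this
  set M : ℝ := Finset.univ.sup' ⟨i0, Finset.mem_univ i0⟩ (fun i => |d i|) with hM
  have hMpos : 0 < M := by
    have : |d i0| ≤ M := Finset.le_sup' (fun i => |d i|) (Finset.mem_univ i0)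
    have := abs_pos.mpr hi0
    linarith
  set t : ℝ := c / (2 * M) with ht
  have htpos : 0 < t := div_pos hcpos (by linarith)
  -- for |s| ≤ t, each i with d i ≠ 0 satisfies |s * d i| < |xstar i|
  have hsmall : ∀ s : ℝ, |s| ≤ t → ∀ i, d i ≠ 0 → |s * d i| < |xstar i| := by
    intro s hs i hdi
    have hxi : xstar i ≠ 0 := by
      intro h; exact hdi (hdS i h)
    have hiS : i ∈ S := by simp [hS, hxi]
    have h1 : c ≤ |xstar i| := Finset.inf'_le _ hiS
    have h2 : |d i| ≤ M := Finset.le_sup' (fun i => |d i|) (Finset.mem_univ i)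
    have h3 : |s * d i| = |s| * |d i| := abs_mul _ _
    have h4 : |s| * |d i| ≤ t * M := by
      apply mul_le_mul hs h2 (abs_nonneg _) (le_of_lt htpos)
    have h5 : t * M = c / 2 := by
      rw [ht]; field_simp
    rw [h3]
    calc |s| * |d i| ≤ t * M := h4
      _ = c / 2 := h5
      _ < c := by linarith
      _ ≤ |xstar i| := h1
  set L : ℝ := ∑ i, Real.sign (xstar i) * d i with hL
  -- key sum identity
  have hsum : ∀ s : ℝ, |s| ≤ t →
      (∑ i, |xstar i + s * d i|) = (∑ i, |xstar i|) + s * L := by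
    intro s hs
    rw [hL, Finset.mul_sum, ← Finset.sum_add_distrib]
    apply Finset.sum_congr rfl
    intro i _
    by_cases hdi : d i = 0
    · simp [hdi]
    · have := hsmall s hs i hdi
      have h := abs_add_small (a := xstar i) (c := s * d i) this
      rw [h]; ring
  -- fTau identity along the line
  have hf : ∀ s : ℝ, |s| ≤ t →
      fTau τ A b (xstar + s • d) = fTau τ A b xstar + τ * (s * L) := by
    intro s hs
    have hAv : A.mulVec (xstar + s • d) = A.mulVec xstar := by
      rw [A.mulVec_add, A.mulVec_smul, hAd, smul_zero, add_zero]
    have habs : (∑ i, |(xstar + s • d) i|) = (∑ i, |xstar i|) + s * L := by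
      have : ∀ i, (xstar + s • d) i = xstar i + s * d i := fun i => rfl
      simp_rw [this]
      exact hsum s hs
    unfold fTau
    rw [hAv, habs]
    ring
  have habs_t : |t| ≤ t := by rw [abs_of_pos htpos]
  have habs_nt : |(-t)| ≤ t := by rw [abs_neg, abs_of_pos htpos]
  -- L = 0
  have hL0 : L = 0 := by
    have h1 := hmin (xstar + t • d)
    have h2 := hmin (xstar + (-t) • d)
    rw [hf t habs_t] at h1
    rw [hf (-t) habs_nt] at h2
    have p1 : 0 ≤ τ * (t * L) := by linarith
    have p2 : 0 ≤ τ * (-t * L) := by linarith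
    nlinarith [mul_pos hτ htpos]
  refine ⟨xstar + t • d, ?_, ?_, ?_⟩
  · intro h
    have : (xstar + t • d) i0 = xstar i0 := by rw [h]
    have h2 : xstar i0 + t * d i0 = xstar i0 := this
    have : t * d i0 = 0 := by linarith
    rcases mul_eq_zero.mp this with h | h
    · exact absurd h (ne_of_gt htpos)
    · exact hi0 h
  · rw [hf t habs_t, hL0]; ring
  · intro x
    rw [hf t habs_t, hL0]
    simpa using hmin x
end
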